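/- Let v ≥ 2 be an integer and define f(x) = log₂((v−x)^(v−x)/((v−1−x)^(v−1−x) · x^x)) + log₂((v−1)^(v−1)/((v−2+x)^(v−2+x) · (1−x)^(2(1−x)))) for 0 < x < 1. Then f attains its maximum on (0,1) at ξ = (1 + v − √(v² + 2v − 3))/2, and ξ < 1. -/

import Mathlib

/-!
On `(0, 1)`, `f3 v · log 2` is a signed sum of terms `y log y`, so its derivative is
`log ((v-1-x)(1-x)²) - log (x(v-x)(v-2+x))`. The difference of the two arguments factors as
`(v-1)(x² - (v+1)x + 1) = (v-1)(x - ξ)(x - (v+1-ξ))` with `v + 1 - ξ > 1`, so `f3 v` increases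
on `(0, ξ)` and decreases on `(ξ, 1)`.
-/

open Real

/-- The function `f_{3,v}(1, x)` from the strength-3 bound, using real powers. -/
noncomputable def f3 (v : ℕ) (x : ℝ) : ℝ :=
  Real.logb 2 (((v : ℝ) - x) ^ (((v : ℝ) - x)) /
      ((((v : ℝ) - 1 - x) ^ (((v : ℝ) - 1 - x))) * x ^ x)) +
  Real.logb 2 (((v : ℝ) - 1) ^ (((v : ℝ) - 1)) /
      ((((v : ℝ) - 2 + x) ^ (((v : ℝ) - 2 + x))) * (1 - x) ^ (2 * (1 - x))))

open Set

/-- The smaller root of `x² - (v + 1) x + 1`; the other one is `v + 1 - xi v`. -/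
noncomputable def xi (v : ℝ) : ℝ := (1 + v - √(v ^ 2 + 2 * v - 3)) / 2

lemma xi_mem_Ioo {v : ℝ} (hv : 1 < v) : xi v ∈ Ioo 0 1 := by
  have hs_lt : √(v ^ 2 + 2 * v - 3) < v + 1 := by
    rw [sqrt_lt' (by linarith)]; nlinarith
  have hs_gt : v - 1 < √(v ^ 2 + 2 * v - 3) := by
    rw [lt_sqrt (by linarith)]; nlinarith
  constructor <;> unfold xi <;> linarith

lemma xi_mul_add_one_sub_xi {v : ℝ} (hv : 1 ≤ v) : xi v * (v + 1 - xi v) = 1 := by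
  have hs : √(v ^ 2 + 2 * v - 3) ^ 2 = v ^ 2 + 2 * v - 3 := sq_sqrt (by nlinarith)
  unfold xi
  linear_combination (-1 / 4 : ℝ) * hs

lemma sub_eq_mul_sub_xi {v : ℝ} (hv : 1 ≤ v) (x : ℝ) :
    (v - 1 - x) * (1 - x) ^ 2 - x * (v - x) * (v - 2 + x)
      = (v - 1) * (x - (v + 1 - xi v)) * (x - xi v) := by
  linear_combination (1 - v) * xi_mul_add_one_sub_xi hv

noncomputable def f3Ln (v x : ℝ) : ℝ :=
  (v - x) * log (v - x) - (v - 1 - x) * log (v - 1 - x) - x * log x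
    + (v - 1) * log (v - 1) - (v - 2 + x) * log (v - 2 + x) - 2 * ((1 - x) * log (1 - x))

lemma f3_eq_f3Ln_div_log_two {v : ℕ} (hv : 2 ≤ (v : ℝ)) {x : ℝ} (hx : x ∈ Ioo 0 1) :
    f3 v x = f3Ln v x / log 2 := by
  obtain ⟨hx0, hx1⟩ := hx
  have h1 : 0 < (v : ℝ) - x := by linarith
  have h2 : 0 < (v : ℝ) - 1 - x := by linarith
  have h4 : 0 < (v : ℝ) - 1 := by linarith
  have h5 : 0 < (v : ℝ) - 2 + x := by linarith
  have h6 : 0 < 1 - x := by linarith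
  unfold f3 f3Ln
  rw [logb, logb, log_div (by positivity) (by positivity), log_div (by positivity) (by positivity),
    log_mul (by positivity) (by positivity), log_mul (by positivity) (by positivity),
    log_rpow h1, log_rpow h2, log_rpow hx0, log_rpow h4, log_rpow h5, log_rpow h6]
  ring

lemma hasDerivAt_f3Ln {v x : ℝ} (hv : 2 ≤ v) (hx : x ∈ Ioo 0 1) :
    HasDerivAt (f3Ln v)
      (log ((v - 1 - x) * (1 - x) ^ 2) - log (x * (v - x) * (v - 2 + x))) x := by
  obtain ⟨hx0, hx1⟩ := hx
  have h1 : 0 < v - x := by linarith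
  have h2 : 0 < v - 1 - x := by linarith
  have h5 : 0 < v - 2 + x := by linarith
  have h6 : 0 < 1 - x := by linarith
  have hd (c s : ℝ) (hc : c + s * x ≠ 0) :
      HasDerivAt (fun t ↦ (c + s * t) * log (c + s * t)) ((log (c + s * x) + 1) * s) x := by
    have hlin : HasDerivAt (fun t ↦ c + s * t) s x := by
      simpa using ((hasDerivAt_id x).const_mul s).const_add c
    exact (hasDerivAt_mul_log hc).comp x hlin
  have key :=
    ((((hd v (-1) (by linarith)).sub (hd (v - 1) (-1) (by linarith))).sub (hd 0 1 (by linarith))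
      |>.add_const ((v - 1) * log (v - 1))).sub (hd (v - 2) 1 (by linarith))).sub
      ((hd 1 (-1) (by linarith)).const_mul 2)
  refine (key.congr_deriv ?_).congr_of_eventuallyEq (.of_forall fun t ↦ ?_)
  · rw [log_mul (by positivity) (by positivity), log_mul (by positivity) (by positivity),
      log_mul (by positivity) (by positivity), log_pow]
    ring_nf
  · simp only [f3Ln, Pi.sub_apply]
    ring_nf

lemma hasDerivAt_f3 {v : ℕ} (hv : 2 ≤ (v : ℝ)) {x : ℝ} (hx : x ∈ Ioo 0 1) :
    HasDerivAt (f3 v)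
      ((log ((v - 1 - x) * (1 - x) ^ 2) - log (x * (v - x) * (v - 2 + x))) / log 2) x :=
  ((hasDerivAt_f3Ln hv hx).div_const _).congr_of_eventuallyEq <|
    Filter.eventuallyEq_of_mem (isOpen_Ioo.mem_nhds hx) fun _ hy ↦ f3_eq_f3Ln_div_log_two hv hy

lemma deriv_f3_pos_iff_and_neg_iff {v : ℕ} (hv : 2 ≤ (v : ℝ)) {x : ℝ} (hx : x ∈ Ioo 0 1) :
    (0 < deriv (f3 v) x ↔ x < xi v) ∧ (deriv (f3 v) x < 0 ↔ xi v < x) := by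
  obtain ⟨hx0, hx1⟩ := hx
  have hA : 0 < ((v : ℝ) - 1 - x) * (1 - x) ^ 2 := by
    have : 0 < (v : ℝ) - 1 - x := by linarith
    positivity
  have hB : 0 < x * ((v : ℝ) - x) * (v - 2 + x) := by
    have : 0 < (v : ℝ) - x := by linarith
    have : 0 < (v : ℝ) - 2 + x := by linarith
    positivity
  have hfac := sub_eq_mul_sub_xi (v := v) (by linarith) x
  have hξ := xi_mem_Ioo (v := v) (by linarith)
  have hneg : ((v : ℝ) - 1) * (x - (v + 1 - xi v)) < 0 :=
    mul_neg_of_pos_of_neg (by linarith) (by linarith [hξ.2])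
  have hlog2 : 0 < log 2 := log_pos one_lt_two
  rw [(hasDerivAt_f3 hv ⟨hx0, hx1⟩).deriv, div_pos_iff_of_pos_right hlog2, div_lt_iff₀ hlog2,
    zero_mul, sub_pos, sub_neg, log_lt_log_iff hB hA, log_lt_log_iff hA hB, ← sub_pos, ← sub_neg (a := ((v : ℝ) - 1 - x) * _), hfac]
  constructor <;> constructor <;> intro h <;> nlinarith

theorem f3_max_at_xi (v : ℕ) (hv : 2 ≤ v) :
    (1 + (v : ℝ) - Real.sqrt ((v : ℝ) ^ 2 + 2 * (v : ℝ) - 3)) / 2 < 1 ∧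
    deriv (f3 v) ((1 + (v : ℝ) - Real.sqrt ((v : ℝ) ^ 2 + 2 * (v : ℝ) - 3)) / 2) = 0 ∧
    ∀ x ∈ Set.Ioo (0 : ℝ) 1,
      f3 v x ≤ f3 v ((1 + (v : ℝ) - Real.sqrt ((v : ℝ) ^ 2 + 2 * (v : ℝ) - 3)) / 2) := by
  show xi v < 1 ∧ deriv (f3 v) (xi v) = 0 ∧ ∀ x ∈ Ioo 0 1, f3 v x ≤ f3 v (xi v)
  have hv' : (2 : ℝ) ≤ v := by exact_mod_cast hv
  have hξ := xi_mem_Ioo (v := v) (by linarith)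
  have hsign (x : ℝ) (hx : x ∈ Ioo 0 1) := deriv_f3_pos_iff_and_neg_iff hv' hx
  have hdiff : DifferentiableOn ℝ (f3 v) (Ioo 0 1) := fun x hx ↦
    (hasDerivAt_f3 hv' hx).differentiableAt.differentiableWithinAt
  refine ⟨hξ.2, ?_, fun x hx ↦ ?_⟩
  · have h := hsign _ hξ
    simp only [lt_irrefl, iff_false, not_lt] at h
    exact le_antisymm h.1 h.2
  · refine isMaxOn_Ioo_of_deriv (hasDerivAt_f3 hv' hξ).continuousAt
      (hdiff.mono (Ioo_subset_Ioo_right hξ.2.le)) (hdiff.mono (Ioo_subset_Ioo_left hξ.1.le))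
      (fun y hy ↦ ((hsign y ⟨hy.1, hy.2.trans hξ.2⟩).1.2 hy.2).le)
      (fun y hy ↦ ((hsign y ⟨hξ.1.trans hy.1, hy.2⟩).2.2 hy.1).le) hx
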